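/- Let n ≥ 1 and j ≥ 1. The negative Benenti potential V_1^{(−j)} depends only on the last j coordinates q_{n−j+1},…,q_n: for any q, q' ∈ ℝ^n with q_n ≠ 0, q'_n ≠ 0, and q_l = q'_l for all l ≥ n−j+1, one has V_1^{(−j)}(q) = V_1^{(−j)}(q'). -/
import Mathlib


noncomputable section

/-- Benenti potentials `V_i^{(k)}` for `k ≥ 0`: `Vpos n q k i = V_i^{(k)}(q)` (`i` 1-based),
with `V_i^{(0)} = δ_{i n}` and `V_i^{(k+1)} = V_{i+1}^{(k)} - q_i V_1^{(k)}`, `V_{n+1}^{(k)} := 0`. -/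
def Vpos (n : ℕ) (q : ℕ → ℝ) : ℕ → ℕ → ℝ
  | 0, i => if i = n then 1 else 0
  | k + 1, i => (if i = n then 0 else Vpos n q k (i + 1)) - q i * Vpos n q k 1

/-- Benenti potentials for negative superscripts: `Vneg n q j r = V_r^{(-j)}(q)`, via the
backward recursion `V_r^{(k)} = V_{r-1}^{(k+1)} - (q_{r-1}/q_n) V_n^{(k+1)}`, with
`V_0 := 0` and `q_0 := 1`. -/
def Vneg (n : ℕ) (q : ℕ → ℝ) : ℕ → ℕ → ℝ
  | 0, r => if r = n then 1 else 0
  | j + 1, r =>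
      (if r = 1 then 0 else Vneg n q j (r - 1)) -
        (if r = 1 then 1 else q (r - 1)) / q n * Vneg n q j n

/-- Benenti potential `V_i^{(k)}(q)` for `k : ℤ`, `i` 1-based. -/
def benenti (n : ℕ) (q : ℕ → ℝ) (k : ℤ) (i : ℕ) : ℝ :=
  if 0 ≤ k then Vpos n q k.toNat i else Vneg n q (-k).toNat i

lemma Vneg_congr (n : ℕ) (q q' : ℕ → ℝ) :
    ∀ j r, 1 ≤ r → r ≤ n → (∀ l, 1 ≤ l → l ≤ n → r ≤ l + j → q l = q' l) →
      Vneg n q j r = Vneg n q' j r := by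
  intro j
  induction j with
  | zero => intro r _ _ _; simp [Vneg]
  | succ j ih =>
    intro r hr1 hrn hag
    by_cases h1 : r = 1
    · subst h1
      simp only [Vneg, reduceIte]
      rw [hag n (by omega) le_rfl (by omega),
        ih n (by omega) le_rfl (fun l h1 hl hli => hag l h1 hl (by omega))]
    · simp only [Vneg, if_neg h1]
      rw [hag (r - 1) (by omega) (by omega) (by omega), hag n (by omega) le_rfl (by omega),
        ih (r - 1) (by omega) (by omega) (fun l h1 hl hli => hag l h1 hl (by omega)),
        ih n (by omega) le_rfl (fun l h1 hl hli => hag l h1 hl (by omega))]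

theorem negative_potential_depends_on_last_coordinates (n : ℕ) (hn : 1 ≤ n) (j : ℕ)
    (hj : 1 ≤ j) (q q' : ℕ → ℝ) (hqn : q n ≠ 0) (hqn' : q' n ≠ 0)
    (hagree : ∀ l, n - j + 1 ≤ l → l ≤ n → q l = q' l) :
    benenti n q (-(j : ℤ)) 1 = benenti n q' (-(j : ℤ)) 1 := by
  obtain ⟨j', rfl⟩ : ∃ j', j = j' + 1 := ⟨j - 1, by omega⟩
  have hneg : ¬(0 ≤ -((j' + 1 : ℕ) : ℤ)) := by push_cast; omega
  have htn : (-(-((j' + 1 : ℕ) : ℤ))).toNat = j' + 1 := by simp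
  rw [benenti, benenti, if_neg hneg, if_neg hneg, htn]
  simp only [Vneg, reduceIte]
  rw [hagree n (by omega) le_rfl,
    Vneg_congr n q q' j' n hn le_rfl (fun l h1 hl hli => hagree l (by omega) hl)]
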